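/- In the epidemic setting with severity and app usage, let t ∈ ℝ with Ω_t nonempty, let τ > 0, let g be in the range of G, and let a ∈ {app, no app}. Then #Ω_t · P_t(τ^σ_t = τ, Ĝ_t = g, Â_t = a) = Σ_{ω' ∈ Ω_{t−τ,g,a}} n^τ(ω'); equivalently, if Ω_{t−τ,g,a} is nonempty, P_t(τ^σ_t = τ, Ĝ_t = g, Â_t = a) = E_{P_{t−τ,g,a}}(n^τ) · (#Ω_{t−τ,g,a}/#Ω_t). -/

import Mathlib

open Finset
open scoped Classical ENNReal NNReal

noncomputable section

variable {Ω : Type*} [Fintype Ω]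

/-- Number of elements of `Ω` satisfying `E`, as a real number. -/
def cnt (E : Ω → Prop) : ℝ := ((Finset.univ.filter E).card : ℝ)

/-- The uniform (counting) probability of the event `E`. -/
def pr (E : Ω → Prop) : ℝ := cnt E / (Fintype.card Ω : ℝ)

/-- The conditional probability of the event `E` given the event `C`
(junk value `0` if `C` is empty). -/
def prC (C E : Ω → Prop) : ℝ := cnt (fun ω => C ω ∧ E ω) / cnt C

/-- The expectation of `X` under the uniform probability measure. -/
def expec (X : Ω → ℝ) : ℝ := (∑ ω, X ω) / (Fintype.card Ω : ℝ)

/-- The conditional expectation of `X` given the event `C`, i.e. the average of `X`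
over `C` (junk value `0` if `C` is empty). -/
def expecC (C : Ω → Prop) (X : Ω → ℝ) : ℝ :=
  (∑ ω ∈ Finset.univ.filter C, X ω) / cnt C

end

/-- Whether or not an individual uses the contact-tracing app. -/
inductive AppUse : Type
  | app : AppUse
  | noapp : AppUse
  deriving DecidableEq

instance : Fintype AppUse :=
  ⟨{AppUse.app, AppUse.noapp}, fun x => by cases x <;> simp⟩


noncomputable section

variable {Ω : Type*} [Fintype Ω]

/-- `ninf tI σ τ ω` is the number of people infected by `ω` exactly at `ω`'s infectious
age `τ`: the number of `ω' ∈ Ω_{>0}` with `σ ω' = ω` and generation time `τ^σ ω' = τ`. -/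
def ninf (tI : Ω → ℝ) (σ : Ω → Ω) (τ : ℝ) (ω : Ω) : ℝ :=
  cnt (fun ω' => 0 < tI ω' ∧ σ ω' = ω ∧ tI ω' - tI (σ ω') = τ)

/-- The (finitely many) positive times `τ` such that `Ω_{t-τ}` is nonempty. -/
def genTimes (tI : Ω → ℝ) (t : ℝ) : Finset ℝ :=
  (Finset.univ.image (fun ω' => t - tI ω')).filter (fun τ => 0 < τ)

end


/-!
Sorting the infectees `ω ∈ Ω_t` with generation time `τ` by their infector `σ ω`, whose
infection time is then `t - τ`, counts each infector `ω' ∈ Ω_{t-τ,g,a}` exactly `n^τ(ω')`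
times. The second identity only rewrites this sum as the average of `n^τ` over
`Ω_{t-τ,g,a}` times its size.
-/

section Counting

variable {Ω : Type*} [Fintype Ω]

theorem cnt_congr {E E' : Ω → Prop} (h : ∀ ω, E ω ↔ E' ω) : cnt E = cnt E' :=
  congrArg cnt (funext fun ω => propext (h ω))

theorem cnt_eq_zero_of_imp {E E' : Ω → Prop} (h : ∀ ω, E ω → E' ω) (h' : cnt E' = 0) :
    cnt E = 0 := by
  simp only [cnt, Nat.cast_eq_zero, Finset.card_eq_zero, ← Finset.subset_empty] at h' ⊢
  exact (Finset.monotone_filter_right _ fun ω _ => h ω).trans h'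

theorem cnt_mul_prC (C E : Ω → Prop) : cnt C * prC C E = cnt (fun ω => C ω ∧ E ω) :=
  mul_div_cancel_of_imp' (cnt_eq_zero_of_imp fun _ => And.left)

theorem sum_filter_eq_zero_of_cnt_eq_zero {C : Ω → Prop} (X : Ω → ℝ) (h : cnt C = 0) :
    ∑ ω ∈ Finset.univ.filter C, X ω = 0 := by
  simp only [cnt, Nat.cast_eq_zero, Finset.card_eq_zero] at h
  simp [h]

theorem expecC_mul_cnt (C : Ω → Prop) (X : Ω → ℝ) :
    expecC C X * cnt C = ∑ ω ∈ Finset.univ.filter C, X ω :=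
  div_mul_cancel_of_imp (sum_filter_eq_zero_of_cnt_eq_zero X)

theorem cnt_and_comp_eq_sum {β : Type*} [Fintype β] (f : Ω → β) (R : Ω → Prop)
    (P : β → Prop) [DecidablePred P] :
    cnt (fun ω => R ω ∧ P (f ω)) =
      ∑ b ∈ Finset.univ.filter P, cnt (fun ω => R ω ∧ f ω = b) := by
  simp only [cnt, ← Nat.cast_sum]
  rw [Finset.card_eq_sum_card_fiberwise (f := f) (t := Finset.univ.filter P)
    fun ω hω => by simp_all]
  refine congrArg _ (Finset.sum_congr rfl fun b hb => congrArg _ ?_)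
  ext ω
  simp only [Finset.mem_filter, Finset.mem_univ, true_and]
  constructor
  · rintro ⟨⟨hR, _⟩, hf⟩
    exact ⟨hR, hf⟩
  · rintro ⟨hR, rfl⟩
    exact ⟨⟨hR, by simpa using hb⟩, rfl⟩

theorem cnt_infected_eq_sum_ninf (tI : Ω → ℝ) (σ : Ω → Ω)
    (P : Ω → Prop) [DecidablePred P] (t τ : ℝ) :
    cnt (fun ω => tI ω = t ∧ (0 < tI ω ∧ tI ω - tI (σ ω) = τ ∧ P (σ ω))) =
      ∑ ω' ∈ Finset.univ.filter (fun ω' => tI ω' = t - τ ∧ P ω'), ninf tI σ τ ω' := by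
  have hregroup : ∀ ω, (tI ω = t ∧ (0 < tI ω ∧ tI ω - tI (σ ω) = τ ∧ P (σ ω))) ↔
      ((0 < tI ω ∧ tI ω - tI (σ ω) = τ) ∧ (tI (σ ω) = t - τ ∧ P (σ ω))) := fun ω => by
    constructor
    · rintro ⟨ht, hpos, hgen, hP⟩
      exact ⟨⟨hpos, hgen⟩, by linarith, hP⟩
    · rintro ⟨⟨hpos, hgen⟩, ht, hP⟩
      exact ⟨by linarith, hpos, hgen, hP⟩
  rw [cnt_congr hregroup, cnt_and_comp_eq_sum σ _ fun ω' => tI ω' = t - τ ∧ P ω']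
  refine Finset.sum_congr rfl fun ω' _ => cnt_congr fun ω => ?_
  tauto

end Counting

theorem statement_14_general {Ω : Type*} [Fintype Ω] (tI : Ω → ℝ) (σ : Ω → Ω)
    (G : Ω → ℝ) (A : Ω → AppUse) (t : ℝ)
    (τ : ℝ) (g : ℝ) (a : AppUse) :
    cnt (fun ω => tI ω = t) *
        prC (fun ω => tI ω = t)
          (fun ω => 0 < tI ω ∧ tI ω - tI (σ ω) = τ ∧ G (σ ω) = g ∧ A (σ ω) = a) =
      ∑ ω' ∈ Finset.univ.filter (fun ω' => tI ω' = t - τ ∧ G ω' = g ∧ A ω' = a),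
        ninf tI σ τ ω'
    ∧
    ((Finset.univ.filter (fun ω' => tI ω' = t - τ ∧ G ω' = g ∧ A ω' = a)).Nonempty →
      prC (fun ω => tI ω = t)
          (fun ω => 0 < tI ω ∧ tI ω - tI (σ ω) = τ ∧ G (σ ω) = g ∧ A (σ ω) = a) =
        expecC (fun ω => tI ω = t - τ ∧ G ω = g ∧ A ω = a) (ninf tI σ τ) *
          (cnt (fun ω => tI ω = t - τ ∧ G ω = g ∧ A ω = a) /
            cnt (fun ω => tI ω = t))) := by
  have hcount := cnt_infected_eq_sum_ninf tI σ (fun ω => G ω = g ∧ A ω = a) t τ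
  refine ⟨(cnt_mul_prC _ _).trans hcount, fun _ => ?_⟩
  rw [prC, hcount, ← mul_div_assoc, expecC_mul_cnt]
  -- the two filters differ only in their `Decidable` instances
  congr!

/-- joint distribution of generation time, infector's severity and
infector's app usage.  Epidemic setting with severity `G` and app usage `A`;
`Ĝ = G ∘ σ`, `Â = A ∘ σ` on `Ω_{>0}`.  For `τ > 0`, `g` in the range of `G` and
`a ∈ {app, no app}`:
`#Ω_t · P_t(τ^σ_t = τ, Ĝ_t = g, Â_t = a) = Σ_{ω' ∈ Ω_{t−τ,g,a}} n^τ(ω')`, and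
equivalently, if `Ω_{t−τ,g,a}` is nonempty,
`P_t(τ^σ_t = τ, Ĝ_t = g, Â_t = a) = E_{P_{t−τ,g,a}}(n^τ) · (#Ω_{t−τ,g,a}/#Ω_t)`. -/
theorem statement_14 {Ω : Type*} [Fintype Ω] (tI : Ω → ℝ) (σ : Ω → Ω)
    (hσ : ∀ ω, 0 < tI ω → tI (σ ω) < tI ω)
    (G : Ω → ℝ) (A : Ω → AppUse) (t : ℝ)
    (hne : (Finset.univ.filter (fun ω => tI ω = t)).Nonempty)
    (τ : ℝ) (hτ : 0 < τ) (g : ℝ) (hg : ∃ ω, G ω = g) (a : AppUse) :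
    cnt (fun ω => tI ω = t) *
        prC (fun ω => tI ω = t)
          (fun ω => 0 < tI ω ∧ tI ω - tI (σ ω) = τ ∧ G (σ ω) = g ∧ A (σ ω) = a) =
      ∑ ω' ∈ Finset.univ.filter (fun ω' => tI ω' = t - τ ∧ G ω' = g ∧ A ω' = a),
        ninf tI σ τ ω'
    ∧
    ((Finset.univ.filter (fun ω' => tI ω' = t - τ ∧ G ω' = g ∧ A ω' = a)).Nonempty →
      prC (fun ω => tI ω = t)
          (fun ω => 0 < tI ω ∧ tI ω - tI (σ ω) = τ ∧ G (σ ω) = g ∧ A (σ ω) = a) =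
        expecC (fun ω => tI ω = t - τ ∧ G ω = g ∧ A ω = a) (ninf tI σ τ) *
          (cnt (fun ω => tI ω = t - τ ∧ G ω = g ∧ A ω = a) /
            cnt (fun ω => tI ω = t))) :=
  statement_14_general tI σ G A t τ g a
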